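/- Restriction preserves strong admissibility downward along the numbering: if Lab is a strongly admissible labelling with min-max numbering MM, and n ∈ ℕ, then the labelling Lab' that keeps the labels of all arguments x with MM(x) ≤ n and relabels all other in/out arguments undec is again a strongly admissible labelling, with MM restricted as its min-max numbering. -/

import Mathlib

inductive Label where
  | inn | out | und
deriving DecidableEq

/-- A labelling is admissible if every in-labelled argument has all its attackers
labelled out, and every out-labelled argument has at least one in-labelled attacker. -/
def Admissible {Ar : Type*} (att : Ar → Ar → Prop) (L : Ar → Label) : Prop :=
  (∀ x, L x = Label.inn → ∀ y, att y x → L y = Label.out) ∧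
  (∀ x, L x = Label.out → ∃ y, att y x ∧ L y = Label.inn)

/-- A min-max numbering (with only natural-number values): in-arguments are numbered
1 + max of the numbers of their out-labelled attackers (max ∅ = 0), and out-arguments
1 + min of the numbers of their in-labelled attackers. -/
def IsMinMax {Ar : Type*} (att : Ar → Ar → Prop) (L : Ar → Label) (MM : Ar → ℕ) : Prop :=
  (∀ x, L x = Label.inn → MM x = sSup (MM '' {y | att y x ∧ L y = Label.out}) + 1) ∧
  (∀ x, L x = Label.out → MM x = sInf (MM '' {y | att y x ∧ L y = Label.inn}) + 1)

/-- Strongly admissible: admissible and admitting a min-max numbering with only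
natural-number (finite) values. -/
def StronglyAdmissible {Ar : Type*} (att : Ar → Ar → Prop) (L : Ar → Label) : Prop :=
  Admissible att L ∧ ∃ MM : Ar → ℕ, IsMinMax att L MM

/-- Complete labelling: admissible, and every undec argument has an undec attacker
and no in-labelled attacker. -/
def CompleteLab {Ar : Type*} (att : Ar → Ar → Prop) (L : Ar → Label) : Prop :=
  Admissible att L ∧
  ∀ x, L x = Label.und →
    (∃ y, att y x ∧ L y = Label.und) ∧ ∀ y, att y x → L y ≠ Label.inn

/-- The order on labellings: Lab1 ⊑ Lab2 iff in(Lab1) ⊆ in(Lab2) and out(Lab1) ⊆ out(Lab2). -/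
def LabLe {Ar : Type*} (L1 L2 : Ar → Label) : Prop :=
  (∀ x, L1 x = Label.inn → L2 x = Label.inn) ∧
  (∀ x, L1 x = Label.out → L2 x = Label.out)

/-! Every out-labelled attacker of an in-labelled argument has a smaller number, and every
out-labelled argument has an in-labelled attacker numbered exactly one less. So the arguments
numbered at most `n` carry, among themselves, all the attackers that admissibility and the
min-max equations refer to, and cutting off the rest changes none of those equations. -/

section

variable {Ar : Type*} {att : Ar → Ar → Prop} {Lab : Ar → Label} {MM : Ar → ℕ}

theorem IsMinMax.out_attacker_lt [Finite Ar] (hmm : IsMinMax att Lab MM) {x y : Ar}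
    (hx : Lab x = .inn) (hyx : att y x) (hy : Lab y = .out) : MM y < MM x := by
  have hle : MM y ≤ sSup (MM '' {y | att y x ∧ Lab y = .out}) :=
    le_csSup (Set.toFinite _).bddAbove ⟨y, ⟨hyx, hy⟩, rfl⟩
  rw [hmm.1 x hx]
  omega

theorem IsMinMax.exists_inn_attacker_succ_eq (hadm : Admissible att Lab)
    (hmm : IsMinMax att Lab MM) {x : Ar} (hx : Lab x = .out) :
    ∃ y, att y x ∧ Lab y = .inn ∧ MM x = MM y + 1 := by
  obtain ⟨y₀, hy₀x, hy₀⟩ := hadm.2 x hx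
  obtain ⟨y, ⟨hyx, hy⟩, hmin⟩ :=
    Nat.sInf_mem (s := MM '' {y | att y x ∧ Lab y = .inn}) ⟨MM y₀, y₀, ⟨hy₀x, hy₀⟩, rfl⟩
  exact ⟨y, hyx, hy, hmin ▸ hmm.2 x hx⟩

def truncateAt (Lab : Ar → Label) (MM : Ar → ℕ) (n : ℕ) (x : Ar) : Label :=
  if MM x ≤ n then Lab x else .und

theorem truncateAt_eq_iff {n : ℕ} {l : Label} (hl : l ≠ .und) {x : Ar} :
    truncateAt Lab MM n x = l ↔ Lab x = l ∧ MM x ≤ n := by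
  unfold truncateAt
  split_ifs with h
  · exact ⟨fun hx => ⟨hx, h⟩, And.left⟩
  · exact ⟨fun hx => absurd hx.symm hl, fun hx => absurd hx.2 h⟩

theorem admissible_truncateAt [Finite Ar] (hadm : Admissible att Lab) (hmm : IsMinMax att Lab MM)
    (n : ℕ) : Admissible att (truncateAt Lab MM n) := by
  constructor
  · intro x hx y hyx
    rw [truncateAt_eq_iff (by decide)] at hx ⊢
    have hy := hadm.1 x hx.1 y hyx
    exact ⟨hy, (hmm.out_attacker_lt hx.1 hyx hy).le.trans hx.2⟩
  · intro x hx
    rw [truncateAt_eq_iff (by decide)] at hx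
    obtain ⟨y, hyx, hy, hxy⟩ := hmm.exists_inn_attacker_succ_eq hadm hx.1
    exact ⟨y, hyx, (truncateAt_eq_iff (by decide)).2 ⟨hy, by omega⟩⟩

theorem isMinMax_truncateAt [Finite Ar] (hadm : Admissible att Lab) (hmm : IsMinMax att Lab MM)
    (n : ℕ) : IsMinMax att (truncateAt Lab MM n) MM := by
  constructor
  · intro x hx
    rw [truncateAt_eq_iff (by decide)] at hx
    have hattackers : {y | att y x ∧ truncateAt Lab MM n y = .out} =
        {y | att y x ∧ Lab y = .out} := by
      ext y
      simp only [Set.mem_ofPred_eq, truncateAt_eq_iff (show Label.out ≠ .und by decide)]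
      refine ⟨fun h => ⟨h.1, h.2.1⟩, fun h => ⟨h.1, h.2, ?_⟩⟩
      exact (hmm.out_attacker_lt hx.1 h.1 h.2).le.trans hx.2
    rw [hattackers]
    exact hmm.1 x hx.1
  · intro x hx
    rw [truncateAt_eq_iff (by decide)] at hx
    obtain ⟨y, hyx, hy, hxy⟩ := hmm.exists_inn_attacker_succ_eq hadm hx.1
    suffices hleast : IsLeast (MM '' {z | att z x ∧ truncateAt Lab MM n z = .inn}) (MM y) by
      rw [hleast.csInf_eq, hxy]
    refine ⟨⟨y, ⟨hyx, (truncateAt_eq_iff (by decide)).2 ⟨hy, by omega⟩⟩, rfl⟩, ?_⟩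
    rintro _ ⟨z, ⟨hzx, hz⟩, rfl⟩
    rw [truncateAt_eq_iff (by decide)] at hz
    have hinf : sInf (MM '' {z | att z x ∧ Lab z = .inn}) ≤ MM z :=
      Nat.sInf_le ⟨z, ⟨hzx, hz.1⟩, rfl⟩
    have hx_eq := hmm.2 x hx.1
    omega

end

/-- Restricting a strongly admissible labelling to arguments with
min-max number ≤ n (relabelling the others undec) is again strongly admissible,
with the same numbering as its min-max numbering. -/
theorem restriction_stronglyAdmissible
    {Ar : Type*} [Fintype Ar] (att : Ar → Ar → Prop) (Lab : Ar → Label) (MM : Ar → ℕ)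
    (hadm : Admissible att Lab) (hmm : IsMinMax att Lab MM) (n : ℕ)
    (Lab' : Ar → Label)
    (hkeep : ∀ x, Lab x ≠ Label.und → MM x ≤ n → Lab' x = Lab x)
    (hdrop : ∀ x, (Lab x = Label.und ∨ ¬ MM x ≤ n) → Lab' x = Label.und) :
    Admissible att Lab' ∧ IsMinMax att Lab' MM := by
  obtain rfl : Lab' = truncateAt Lab MM n := by
    funext x
    unfold truncateAt
    split_ifs with hx
    · by_cases hund : Lab x = .und
      · rw [hdrop x (.inl hund), hund]
      · exact hkeep x hund hx
    · exact hdrop x (.inr hx)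
  exact ⟨admissible_truncateAt hadm hmm n, isMinMax_truncateAt hadm hmm n⟩
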